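/- For every n ≥ 4, all complex roots of the independence polynomial I(A_n,x) of the apple graph A_n are real, where A_n is obtained from a path on vertices 1,...,n by adding the edge (2,n). -/

import Mathlib

open Polynomial

noncomputable def indepPoly {V : Type*} [Finite V] (G : SimpleGraph V) : Polynomial ℝ :=
  haveI := Fintype.ofFinite V
  haveI := Classical.decPred fun s : Finset V => ∀ u ∈ s, ∀ v ∈ s, ¬G.Adj u v
  ∑ s ∈ Finset.univ.filter (fun s : Finset V => ∀ u ∈ s, ∀ v ∈ s, ¬G.Adj u v), X ^ s.card


/-- The apple graph `Aₙ`: a path on vertices `0, 1, …, n - 1` together with the extra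
edge between vertex `1` and vertex `n - 1` (vertices `2` and `n` in 1-indexed
labelling). -/
def apple (n : ℕ) : SimpleGraph (Fin n) :=
  SimpleGraph.fromRel (fun i j =>
    (i : ℕ) + 1 = (j : ℕ) ∨ ((i : ℕ) = 1 ∧ (j : ℕ) = n - 1))


/-!
Deleting the pendant vertex of `A_{m+4}` and then the cycle vertex it hangs on gives
`I(A_{m+4}) = (1 + x) P_{m+2} + x P_m`, where `P_k` is the independence polynomial of the path
on `k` vertices, `P_{k+2} = P_{k+1} + x P_k`. Under `x = -1/(2 cos θ)²` this is the recurrence of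
`sin ((k + 2) θ) / (sin θ (2 cos θ)^(k+1))`, so at `θ = jπ/(m+4)`, `0 < 2j < m + 4`, the
polynomial has sign `(-1)^j`. Together with its value `1` at `x = 0` this gives `(m+3)/2` sign
changes on the negative axis; the degree is at most one more, so the last root is real as well.
-/

open Polynomial Finset Real

theorem Finset.powerset_map {α β : Type*} (f : α ↪ β) (s : Finset α) :
    (s.map f).powerset = s.powerset.map (mapEmbedding f).toEmbedding := by
  ext t
  simp only [mem_powerset, mem_map, subset_map_iff, RelEmbedding.coe_toEmbedding,
    mapEmbedding_apply]
  grind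

namespace SimpleGraph

variable {V W : Type*}

theorem isIndepSet_insert_iff {G : SimpleGraph V} {a : V} {s : Set V} :
    G.IsIndepSet (insert a s) ↔ G.IsIndepSet s ∧ ∀ v ∈ s, ¬G.Adj a v := by
  simp only [isIndepSet_iff, Set.pairwise_insert]
  grind [G.adj_symm, G.ne_of_adj]

noncomputable def indepPolyOn [DecidableEq V] (G : SimpleGraph V) [DecidableRel G.Adj]
    (S : Finset V) : ℝ[X] :=
  ∑ s ∈ S.powerset.filter (fun s : Finset V => G.IsIndepSet ↑s), X ^ s.card

variable [DecidableEq V] (G : SimpleGraph V) [DecidableRel G.Adj]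

theorem indepPoly_eq_indepPolyOn_univ [Fintype V] : indepPoly G = G.indepPolyOn univ := by
  rw [indepPoly, indepPolyOn, powerset_univ, Subsingleton.elim (Fintype.ofFinite V) ‹_›]
  congr 1
  ext s
  simp only [mem_filter, mem_univ, true_and, isIndepSet_iff, Set.Pairwise, mem_coe]
  exact ⟨fun h u hu v hv _ => h u hu v hv, fun h u hu v hv huv => h hu hv (G.ne_of_adj huv) huv⟩

theorem indepPolyOn_map [DecidableEq W] (G : SimpleGraph W) [DecidableRel G.Adj] (e : V ↪ W)
    (S : Finset V) : G.indepPolyOn (S.map e) = (G.comap e).indepPolyOn S := by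
  rw [indepPolyOn, indepPolyOn, powerset_map, filter_map, sum_map]
  refine sum_congr ?_ fun s _ => by simp
  ext s
  simp [isIndepSet_iff, Set.Pairwise]

@[simp]
theorem indepPolyOn_empty : G.indepPolyOn ∅ = 1 := by
  simp [indepPolyOn, filter_singleton]

theorem indepPolyOn_insert {a : V} {S T : Finset V} (ha : a ∉ S)
    (hT : ∀ v, v ∈ T ↔ v ∈ S ∧ ¬G.Adj a v) :
    G.indepPolyOn (insert a S) = G.indepPolyOn S + X * G.indepPolyOn T := by
  have hdisj : Disjoint S.powerset (S.powerset.image (insert a)) := by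
    simp only [Finset.disjoint_left, mem_powerset, mem_image]
    rintro s hs ⟨t, -, rfl⟩
    exact ha (hs (mem_insert_self a t))
  have hinsert : S.powerset.filter (fun t : Finset V => G.IsIndepSet ↑(insert a t)) =
      T.powerset.filter (fun t : Finset V => G.IsIndepSet ↑t) := by
    ext t
    simp only [mem_filter, mem_powerset, coe_insert, isIndepSet_insert_iff, subset_iff, hT]
    grind
  rw [indepPolyOn, powerset_insert, filter_union, sum_union (disjoint_filter_filter hdisj),
    filter_image, sum_image, hinsert, indepPolyOn, indepPolyOn, mul_sum]
  · congr 1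
    refine sum_congr rfl fun t ht => ?_
    have hat : a ∉ t :=
      notMem_of_mem_powerset_of_notMem (mem_filter.1 ht).1 fun h => ha ((hT a).1 h).1
    rw [card_insert_of_notMem hat, pow_succ']
  · exact insert_erase_invOn.2.injOn.mono fun t ht =>
      notMem_of_mem_powerset_of_notMem (mem_filter.1 ht).1 ha

end SimpleGraph

namespace Polynomial

theorem splits_of_natDegree_le_card_roots_add_one {K : Type*} [Field K] {f : K[X]}
    (h : f.natDegree ≤ Multiset.card f.roots + 1) : f.Splits := by
  obtain ⟨q, -, hcard, hq⟩ := exists_prod_multiset_X_sub_C_mul f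
  rw [splits_iff_card_roots]
  by_contra hne
  have hq1 : q.degree = 1 := by
    have hq0 : q ≠ 0 := by rintro rfl; simp at hcard; omega
    rw [degree_eq_natDegree hq0]
    norm_cast
    omega
  obtain ⟨x, hx⟩ := exists_root_of_degree_eq_one hq1
  have : x ∈ q.roots := (mem_roots (ne_zero_of_degree_gt (n := 0) (by rw [hq1]; norm_num))).2 hx
  simp [hq] at this

theorem exists_mem_Ioo_isRoot_of_eval_mul_neg (f : ℝ[X]) {a b : ℝ} (hab : a ≤ b)
    (h : f.eval a * f.eval b < 0) : ∃ r ∈ Set.Ioo a b, f.IsRoot r := by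
  have hcont : ContinuousOn (fun x => f.eval x) (Set.Icc a b) := f.continuous.continuousOn
  rcases mul_neg_iff.1 h with ⟨ha, hb⟩ | ⟨ha, hb⟩
  · exact intermediate_value_Ioo' hab hcont ⟨hb, ha⟩
  · exact intermediate_value_Ioo hab hcont ⟨ha, hb⟩

theorem le_card_roots_of_eval_mul_neg (f : ℝ[X]) (w : ℕ → ℝ) (N : ℕ)
    (hw : ∀ j < N, w (j + 1) < w j) (hf : ∀ j < N, f.eval (w (j + 1)) * f.eval (w j) < 0) :
    N ≤ Multiset.card f.roots := by
  have hroot (j : Fin N) : ∃ r ∈ Set.Ioo (w (j + 1)) (w j), f.IsRoot r :=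
    f.exists_mem_Ioo_isRoot_of_eval_mul_neg (hw j j.2).le (hf j j.2)
  choose r hr hroot using hroot
  have hanti := strictAntiOn_Iic_of_succ_lt hw
  have hinj : Function.Injective r := by
    refine StrictAnti.injective fun i j hij => ?_
    calc r j < w j := (hr j).2
      _ ≤ w (i + 1) := hanti.antitoneOn (Set.mem_Iic.2 (by omega)) (Set.mem_Iic.2 (by omega))
          (by simp only [Fin.lt_def] at hij; omega)
      _ < r i := (hr i).1
  calc N = #(univ.image r) := by rw [card_image_of_injective _ hinj, card_fin]
    _ ≤ #f.roots.toFinset := card_le_card fun x hx => by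
        obtain ⟨j, -, rfl⟩ := mem_image.1 hx
        exact Multiset.mem_toFinset.2 ((mem_roots fun h0 => by simpa [h0] using hf j j.2).2
          (hroot j))
    _ ≤ Multiset.card f.roots := Multiset.toFinset_card_le _

end Polynomial

open SimpleGraph

noncomputable def pathIndepPoly : ℕ → ℝ[X]
  | 0 => 1
  | 1 => 1 + X
  | k + 2 => pathIndepPoly (k + 1) + X * pathIndepPoly k

theorem indepPolyOn_Ico_eq_pathIndepPoly (G : SimpleGraph ℕ) [DecidableRel G.Adj] (a : ℕ) :
    ∀ k, (∀ i j, a ≤ i → i < j → j < a + k → (G.Adj i j ↔ j = i + 1)) →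
      G.indepPolyOn (Ico a (a + k)) = pathIndepPoly k
  | 0, _ => by simp [pathIndepPoly]
  | 1, _ => by
    rw [Nat.Ico_succ_singleton, ← insert_empty,
      indepPolyOn_insert G (notMem_empty a) (T := ∅) (by simp)]
    simp [pathIndepPoly]
  | k + 2, h => by
    have hT (v : ℕ) : v ∈ Ico a (a + k) ↔ v ∈ Ico a (a + (k + 1)) ∧ ¬G.Adj (a + k + 1) v := by
      simp only [mem_Ico]
      by_cases hv : a ≤ v ∧ v < a + (k + 1)
      · rw [G.adj_comm, h v (a + k + 1) hv.1 (by omega) (by omega)]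
        omega
      · omega
    rw [show Ico a (a + (k + 2)) = insert (a + k + 1) (Ico a (a + (k + 1))) by ext; simp; omega,
      indepPolyOn_insert G (by simp only [mem_Ico]; omega) hT,
      indepPolyOn_Ico_eq_pathIndepPoly G a (k + 1) fun i j hi hij hj => h i j hi hij (by omega),
      indepPolyOn_Ico_eq_pathIndepPoly G a k fun i j hi hij hj => h i j hi hij (by omega)]
    rfl

theorem natDegree_pathIndepPoly_le : ∀ k, (pathIndepPoly k).natDegree ≤ (k + 1) / 2
  | 0 => by simp [pathIndepPoly]
  | 1 => (natDegree_add_le _ _).trans (by simp)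
  | k + 2 => by
    have h1 := natDegree_pathIndepPoly_le (k + 1)
    have h0 := natDegree_pathIndepPoly_le k
    refine (natDegree_add_le _ _).trans (max_le (by omega) ?_)
    refine natDegree_mul_le.trans ?_
    rw [natDegree_X]
    omega

theorem pathIndepPoly_eval_zero : ∀ k, (pathIndepPoly k).eval 0 = 1
  | 0 => by simp [pathIndepPoly]
  | 1 => by simp [pathIndepPoly]
  | k + 2 => by simp [pathIndepPoly, pathIndepPoly_eval_zero (k + 1)]

theorem Real.sin_add_two_mul (a θ : ℝ) : sin (a + 2 * θ) = 2 * cos θ * sin (a + θ) - sin a := by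
  rw [sin_add a (2 * θ), sin_add a θ, sin_two_mul, cos_two_mul]
  ring

theorem pathIndepPoly_eval_trig {θ : ℝ} (hθ : cos θ ≠ 0) : ∀ k : ℕ,
    sin θ * (2 * cos θ) ^ (k + 1) * (pathIndepPoly k).eval (-((2 * cos θ) ^ 2)⁻¹) =
      sin ((k + 2) * θ)
  | 0 => by simp [pathIndepPoly, sin_two_mul]; ring
  | 1 => by
    rw [show ((1 : ℕ) + 2 : ℝ) * θ = 3 * θ by norm_num, sin_three_mul]
    simp [pathIndepPoly]
    field_simp
    linear_combination (4 * sin θ) * cos_sq_add_sin_sq θ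
  | k + 2 => by
    have h1 := pathIndepPoly_eval_trig hθ (k + 1)
    have h0 := pathIndepPoly_eval_trig hθ k
    push_cast at h1 h0 ⊢
    rw [show (k + 2 + 2 : ℝ) * θ = (k + 2) * θ + 2 * θ by ring, sin_add_two_mul,
      show (k + 2 : ℝ) * θ + θ = (k + 1 + 2) * θ by ring, ← h1, ← h0]
    simp only [pathIndepPoly, eval_add, eval_mul, eval_X]
    field_simp
    ring

noncomputable def applePoly (m : ℕ) : ℝ[X] :=
  (1 + X) * pathIndepPoly (m + 2) + X * pathIndepPoly m

def appleNat (n : ℕ) : SimpleGraph ℕ :=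
  SimpleGraph.fromRel fun i j => i + 1 = j ∨ (i = 1 ∧ j = n - 1)

theorem apple_eq_comap (n : ℕ) : apple n = (appleNat n).comap Fin.valEmbedding := by
  ext i j
  simp [apple, appleNat, Fin.ext_iff]

theorem indepPoly_apple (m : ℕ) : indepPoly (apple (m + 4)) = applePoly m := by
  classical
  have hpath (a k : ℕ) (ha : 2 ≤ a) (hk : a + k ≤ m + 4) :
      (appleNat (m + 4)).indepPolyOn (Ico a (a + k)) = pathIndepPoly k :=
    indepPolyOn_Ico_eq_pathIndepPoly _ a k fun i j hi hij hj => by simp [appleNat]; omega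
  have h0 (v : ℕ) : v ∈ Ico 2 (2 + (m + 2)) ↔
      v ∈ insert 1 (Ico 2 (2 + (m + 2))) ∧ ¬(appleNat (m + 4)).Adj 0 v := by
    simp [appleNat]; omega
  have h1 (v : ℕ) : v ∈ Ico 3 (3 + m) ↔
      v ∈ Ico 2 (2 + (m + 2)) ∧ ¬(appleNat (m + 4)).Adj 1 v := by
    simp [appleNat]; omega
  rw [apple_eq_comap, indepPoly_eq_indepPolyOn_univ, ← indepPolyOn_map, Fin.map_valEmbedding_univ,
    show Iio (m + 4) = insert 0 (insert 1 (Ico 2 (2 + (m + 2)))) by ext; simp; omega,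
    indepPolyOn_insert _ (by simp) h0, indepPolyOn_insert _ (by simp) h1,
    hpath 2 (m + 2) le_rfl (by omega), hpath 3 m (by norm_num) (by omega), applePoly]
  ring

theorem natDegree_applePoly_le (m : ℕ) : (applePoly m).natDegree ≤ (m + 3) / 2 + 1 := by
  have h2 := natDegree_pathIndepPoly_le (m + 2)
  have h0 := natDegree_pathIndepPoly_le m
  have h1 : (1 + X : ℝ[X]).natDegree ≤ 1 := (natDegree_add_le _ _).trans (by simp)
  refine (natDegree_add_le _ _).trans (max_le ?_ ?_)
  · exact natDegree_mul_le.trans (by omega)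
  · exact natDegree_mul_le.trans (by rw [natDegree_X]; omega)

theorem applePoly_eval_zero (m : ℕ) : (applePoly m).eval 0 = 1 := by
  simp [applePoly, pathIndepPoly_eval_zero]

theorem applePoly_eval_trig (m : ℕ) {θ : ℝ} (hθ : cos θ ≠ 0) :
    sin θ * (2 * cos θ) ^ (m + 3) * (applePoly m).eval (-((2 * cos θ) ^ 2)⁻¹) =
      (1 - ((2 * cos θ) ^ 2)⁻¹) * sin ((m + 4) * θ) - sin ((m + 2) * θ) := by
  have h2 := pathIndepPoly_eval_trig hθ (m + 2)
  have h0 := pathIndepPoly_eval_trig hθ m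
  push_cast at h2
  rw [show (m + 4 : ℝ) * θ = (m + 2 + 2) * θ by ring, ← h2, ← h0]
  simp only [applePoly, eval_add, eval_mul, eval_X, eval_one]
  field_simp
  ring

theorem neg_inv_sq_two_mul_cos_lt {θ θ' : ℝ} (h0 : 0 ≤ θ) (hθ : θ < θ') (hθ' : θ' < π / 2) :
    -((2 * cos θ') ^ 2)⁻¹ < -((2 * cos θ) ^ 2)⁻¹ := by
  have hc' : 0 < cos θ' := cos_pos_of_mem_Ioo ⟨by linarith, hθ'⟩
  have hc : cos θ' < cos θ :=
    strictAntiOn_cos ⟨h0, by linarith [pi_pos]⟩ ⟨by linarith, by linarith [pi_pos]⟩ hθ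
  gcongr

theorem applePoly_sign (m j : ℕ) (hj : 1 ≤ j) (hjm : 2 * j < m + 4) :
    0 < (-1) ^ j * (applePoly m).eval (-((2 * cos (j * π / (m + 4))) ^ 2)⁻¹) := by
  set θ : ℝ := j * π / (m + 4) with hθ_def
  have hm : (0 : ℝ) < m + 4 := by positivity
  have hθ0 : 0 < θ := by positivity
  have hθ1 : 2 * θ < π := by
    rw [hθ_def, mul_div_assoc', div_lt_iff₀ hm]
    have : (2 * j : ℝ) < m + 4 := by exact_mod_cast hjm
    nlinarith [pi_pos]
  have hcos : 0 < cos θ := cos_pos_of_mem_Ioo ⟨by linarith, by linarith⟩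
  have hsin : 0 < sin θ := sin_pos_of_pos_of_lt_pi hθ0 (by linarith)
  have hsin2 : 0 < sin (2 * θ) := sin_pos_of_pos_of_lt_pi (by linarith) hθ1
  have htrig := applePoly_eval_trig m hcos.ne'
  have h4 : (m + 4 : ℝ) * θ = j * π := by rw [hθ_def]; field_simp
  have h2 : (m + 2 : ℝ) * θ = j * π - 2 * θ := by rw [hθ_def]; field_simp; ring
  rw [h4, h2, sin_nat_mul_pi, sin_nat_mul_pi_sub] at htrig
  have hsq : ((-1 : ℝ) ^ j) ^ 2 = 1 := by rw [← pow_mul, pow_mul']; norm_num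
  have key : sin θ * (2 * cos θ) ^ (m + 3) * ((-1) ^ j * (applePoly m).eval (-((2 * cos θ) ^ 2)⁻¹))
      = sin (2 * θ) := by
    linear_combination (-1) ^ j * htrig + sin (2 * θ) * hsq
  exact (mul_pos_iff_of_pos_left (by positivity)).1 (key ▸ hsin2)

theorem applePoly_splits (m : ℕ) : (applePoly m).Splits := by
  set N := (m + 3) / 2
  let θ (j : ℕ) : ℝ := j * π / (m + 4)
  let w (j : ℕ) : ℝ := if j = 0 then 0 else -((2 * cos (θ j)) ^ 2)⁻¹
  have hθ (j : ℕ) (hj : j ≤ N) : 0 ≤ θ j ∧ θ j < π / 2 := by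
    refine ⟨by positivity, ?_⟩
    rw [div_lt_div_iff₀ (by positivity) two_pos]
    have : (2 * j : ℝ) < m + 4 := by exact_mod_cast (by omega : 2 * j < m + 4)
    nlinarith [pi_pos]
  have hsign (j : ℕ) (hj : j ≤ N) : 0 < (-1) ^ j * (applePoly m).eval (w j) := by
    rcases j.eq_zero_or_pos with rfl | hj0
    · simp [w, applePoly_eval_zero]
    · simpa [w, hj0.ne'] using applePoly_sign m j hj0 (by omega)
  have hw (j : ℕ) (hj : j < N) : w (j + 1) < w j := by
    rcases j.eq_zero_or_pos with rfl | hj0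
    · have : cos (θ 1) ≠ 0 :=
        (cos_pos_of_mem_Ioo ⟨by linarith [hθ 1 (by omega)], (hθ 1 (by omega)).2⟩).ne'
      simp [w]
      positivity
    · have hθj : θ j < θ (j + 1) := by simp only [θ]; gcongr; simp
      simpa [w, hj0.ne'] using neg_inv_sq_two_mul_cos_lt (hθ j hj.le).1 hθj (hθ (j + 1) hj).2
  refine splits_of_natDegree_le_card_roots_add_one ((natDegree_applePoly_le m).trans ?_)
  refine Nat.add_le_add_right (le_card_roots_of_eval_mul_neg _ w N hw fun j hj => ?_) 1
  have := mul_pos (hsign j hj.le) (hsign (j + 1) hj)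
  have hsq : ((-1 : ℝ) ^ j) ^ 2 = 1 := by rw [← pow_mul, pow_mul']; norm_num
  rw [pow_succ] at this
  nlinarith

theorem apple_real_rooted (n : ℕ) (hn : 4 ≤ n) (z : ℂ)
    (hz : ((indepPoly (apple n)).map (algebraMap ℝ ℂ)).IsRoot z) :
    z.im = 0 := by
  obtain ⟨m, rfl⟩ : ∃ m, n = m + 4 := ⟨n - 4, by omega⟩
  rw [indepPoly_apple] at hz
  have hne : applePoly m ≠ 0 := fun h => by simpa [h] using applePoly_eval_zero m
  obtain ⟨x, rfl⟩ := (applePoly_splits m).mem_range_of_isRoot hne hz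
  simp
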